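/- Let X be a connected graph and A an abelian group admitting a harmonic A-flow ν: D(X) → A. Then A is a quotient of the Jacobian Jac(X), i.e., there exists a surjective group homomorphism Jac(X) → A. -/

import Mathlib

/-- A multigraph in the dart model: a finite nonempty set of darts, an involution
reversing darts, and an incidence map assigning to each dart its initial vertex.
Semiedges (fixed darts), loops and parallel edges are allowed. -/
structure Multigraph where
  D : Type
  V : Type
  instFintypeD : Fintype D
  instDecEqD : DecidableEq D
  instNonemptyD : Nonempty D
  instFintypeV : Fintype V
  instDecEqV : DecidableEq V
  inv : D → D
  inv_inv : ∀ x, inv (inv x) = x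
  vtx : D → V
  vtx_surj : Function.Surjective vtx

attribute [instance] Multigraph.instFintypeD Multigraph.instDecEqD
  Multigraph.instNonemptyD Multigraph.instFintypeV Multigraph.instDecEqV

namespace Multigraph

variable (X : Multigraph)

/-- The darts emanating from a vertex. -/
def dartsAt (v : X.V) : Finset X.D := Finset.univ.filter (fun x => X.vtx x = v)

/-- One step along a dart belonging to the set `P` of allowed darts. -/
def step (P : Set X.D) (u v : X.V) : Prop :=
  ∃ x, x ∈ P ∧ X.vtx x = u ∧ X.vtx (X.inv x) = v

/-- Any two vertices are joined by a walk using only darts from `P`. -/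
def PreconnectedOn (P : Set X.D) : Prop :=
  ∀ u v : X.V, Relation.ReflTransGen (X.step P) u v

/-- A multigraph is connected if any two vertices are joined by a walk. -/
def Connected : Prop := X.PreconnectedOn Set.univ

/-- Number of edges in an inv-closed set of darts (semiedges count once). -/
def edgeCount (S : Finset X.D) : ℕ :=
  (S.card + (S.filter (fun x => X.inv x = x)).card) / 2

/-- A spanning tree: an inv-closed set of darts which connects all vertices and
has exactly `|V| - 1` edges. -/
def IsSpanningTree (S : Finset X.D) : Prop :=
  (∀ x ∈ S, X.inv x ∈ S) ∧ X.PreconnectedOn ↑S ∧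
    X.edgeCount S = Fintype.card X.V - 1

/-- The number of spanning trees. -/
noncomputable def tau : ℕ := Nat.card {S : Finset X.D // X.IsSpanningTree S}

/-- A simple graph: no loops, no semiedges, no parallel edges. -/
def Simple : Prop :=
  (∀ x, X.vtx x ≠ X.vtx (X.inv x)) ∧
  (∀ x y, X.vtx x = X.vtx y → X.vtx (X.inv x) = X.vtx (X.inv y) → x = y)

/-- `X` is at least `k`-edge-connected: removing fewer than `k` edges
leaves it connected. -/
def EdgeConnectedGE (k : ℕ) : Prop :=
  ∀ S : Finset X.D, (∀ x ∈ S, X.inv x ∈ S) → X.edgeCount S < k →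
    X.PreconnectedOn (↑S)ᶜ

/-- The automorphism group of a multigraph, as a subgroup of the permutations
of the darts: permutations commuting with the dart-reversing involution and
preserving the partition of darts into vertices. -/
def autGroup : Subgroup (Equiv.Perm X.D) where
  carrier := {f | (∀ x, f (X.inv x) = X.inv (f x)) ∧
    ∀ x y, X.vtx x = X.vtx y ↔ X.vtx (f x) = X.vtx (f y)}
  one_mem' := ⟨fun _ => rfl, fun _ _ => Iff.rfl⟩
  mul_mem' := by
    rintro f g ⟨hf1, hf2⟩ ⟨hg1, hg2⟩
    refine ⟨fun x => ?_, fun x y => ?_⟩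
    · simp [Equiv.Perm.mul_apply, hg1, hf1]
    · simp only [Equiv.Perm.mul_apply]
      exact (hg2 x y).trans (hf2 (g x) (g y))
  inv_mem' := by
    rintro f ⟨hf1, hf2⟩
    refine ⟨fun x => f.injective ?_, fun x y => ?_⟩
    · simp only [Equiv.Perm.coe_inv, Equiv.apply_symm_apply, hf1]
    · have := hf2 (f⁻¹ x) (f⁻¹ y)
      simpa [Equiv.Perm.coe_inv, Equiv.apply_symm_apply] using this.symm

end Multigraph

/-- A covering of multigraphs: a surjective graph homomorphism restricting to a
bijection on the darts at each vertex. -/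
structure Covering (X Y : Multigraph) where
  toFun : X.D → Y.D
  surj : Function.Surjective toFun
  map_inv : ∀ x, toFun (X.inv x) = Y.inv (toFun x)
  map_vtx : ∀ x y, X.vtx x = X.vtx y → Y.vtx (toFun x) = Y.vtx (toFun y)
  loc_inj : ∀ x y, X.vtx x = X.vtx y → toFun x = toFun y → x = y
  loc_surj : ∀ x z, Y.vtx z = Y.vtx (toFun x) →
    ∃ y, X.vtx y = X.vtx x ∧ toFun y = z

namespace Covering

variable {X Y : Multigraph} (ψ : Covering X Y)

/-- The covering is `n`-fold: every fibre has cardinality `n`. -/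
def IsNFold (n : ℕ) : Prop := ∀ z : Y.D, Nat.card {x : X.D // ψ.toFun x = z} = n

/-- The group of covering transformations: automorphisms `f` of `X`
with `ψ ∘ f = ψ`. -/
def CT : Subgroup (Equiv.Perm X.D) where
  carrier := {f | f ∈ X.autGroup ∧ ∀ x, ψ.toFun (f x) = ψ.toFun x}
  one_mem' := ⟨X.autGroup.one_mem, fun _ => rfl⟩
  mul_mem' := by
    rintro f g ⟨hf1, hf2⟩ ⟨hg1, hg2⟩
    exact ⟨X.autGroup.mul_mem hf1 hg1, fun x => by
      simp [Equiv.Perm.mul_apply, hf2, hg2]⟩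
  inv_mem' := by
    rintro f ⟨hf1, hf2⟩
    refine ⟨X.autGroup.inv_mem hf1, fun x => ?_⟩
    conv_rhs => rw [← Equiv.Perm.one_apply x, ← mul_inv_cancel f, Equiv.Perm.mul_apply]
    rw [hf2]

/-- The covering is regular: the covering transformations act transitively
(hence regularly) on every fibre. -/
def IsRegular : Prop :=
  ∀ x y, ψ.toFun x = ψ.toFun y → ∃ f ∈ ψ.CT, f x = y

end Covering
namespace Multigraph

variable (X : Multigraph)

/-- The family `c : Fin n → X.D` of darts is an oriented (simple) cycle:
consecutive darts are incident (cyclically) and the visited vertices are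
pairwise distinct. A single semiedge or loop is a cycle. -/
def IsCycleVec {n : ℕ} (hn : 0 < n) (c : Fin n → X.D) : Prop :=
  (∀ i : Fin n,
    X.vtx (X.inv (c i)) = X.vtx (c ⟨(i.1 + 1) % n, Nat.mod_lt _ hn⟩)) ∧
  Function.Injective fun i => X.vtx (c i)

/-- The defining relations of the Jacobian inside the free abelian group on
the darts: antisymmetry relations, vertex (Kirchhoff) relations and cycle
(Kirchhoff) relations. -/
def jacRels : Set (FreeAbelianGroup X.D) :=
  {a | ∃ x, a = FreeAbelianGroup.of x + FreeAbelianGroup.of (X.inv x)} ∪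
  {a | ∃ v, a = ∑ x ∈ X.dartsAt v, FreeAbelianGroup.of x} ∪
  {a | ∃ (n : ℕ) (hn : 0 < n) (c : Fin n → X.D), X.IsCycleVec hn c ∧
    a = ∑ i, FreeAbelianGroup.of (c i)}

/-- The Jacobian of a graph: the universal abelian group admitting a harmonic
flow on `X`, presented as the free abelian group on the darts modulo the
antisymmetry, vertex and cycle relations. -/
def jac : Type := FreeAbelianGroup X.D ⧸ AddSubgroup.closure X.jacRels

instance : AddCommGroup X.jac :=
  QuotientAddGroup.Quotient.addCommGroup (AddSubgroup.closure X.jacRels)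

/-- The canonical harmonic `J`-flow `D(X) → Jac(X)`. -/
def jflow (x : X.D) : X.jac := QuotientAddGroup.mk (FreeAbelianGroup.of x)

/-- A harmonic `A`-flow on `X`: an antisymmetric function on darts whose values
generate `A` and which satisfies both Kirchhoff laws. -/
structure IsHarmonicFlow {A : Type} [AddCommGroup A] (ν : X.D → A) : Prop where
  antisym : ∀ x, ν (X.inv x) = - ν x
  gen : AddSubgroup.closure (Set.range ν) = ⊤
  klv : ∀ v, ∑ x ∈ X.dartsAt v, ν x = 0
  klc : ∀ {n : ℕ} (hn : 0 < n) (c : Fin n → X.D), X.IsCycleVec hn c →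
    ∑ i, ν (c i) = 0

end Multigraph

/-- If a connected graph `X` admits a harmonic `A`-flow `ν`, then `A` is a
quotient of the Jacobian: there is a surjective group homomorphism
`Jac(X) → A` (sending the canonical `J`-flow to `ν`). -/
theorem jac_surjects_onto_harmonic_target (X : Multigraph) (hconn : X.Connected)
    (A : Type) [AddCommGroup A] (ν : X.D → A) (hν : X.IsHarmonicFlow ν) :
    ∃ φ : X.jac →+ A, Function.Surjective φ ∧ ∀ x, φ (X.jflow x) = ν x := by
  classical
  let f : FreeAbelianGroup X.D →+ A := FreeAbelianGroup.lift ν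
  have hker : AddSubgroup.closure X.jacRels ≤ f.ker := by
    rw [AddSubgroup.closure_le]
    rintro a ((⟨x, rfl⟩ | ⟨v, rfl⟩) | ⟨n, hn, c, hc, rfl⟩)
    · simp [f, AddMonoidHom.mem_ker, FreeAbelianGroup.lift_apply_of, hν.antisym x]
    · simp [f, AddMonoidHom.mem_ker, map_sum, FreeAbelianGroup.lift_apply_of, hν.klv v]
    · simp [f, AddMonoidHom.mem_ker, map_sum, FreeAbelianGroup.lift_apply_of,
        hν.klc hn c hc]
  refine ⟨QuotientAddGroup.lift _ f hker, ?_, fun x => ?_⟩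
  · intro a
    have : a ∈ AddSubgroup.closure (Set.range ν) := by
      rw [hν.gen]; trivial
    have hmem : a ∈ (QuotientAddGroup.lift _ f hker).range := by
      refine (AddSubgroup.closure_le _).mpr ?_ this
      rintro _ ⟨x, rfl⟩
      exact ⟨X.jflow x, by
        simp [Multigraph.jflow, QuotientAddGroup.lift_mk', f,
          FreeAbelianGroup.lift_apply_of]⟩
    exact hmem
  · exact FreeAbelianGroup.lift_apply_of ν x
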